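/- Let E be a quasi-safe L-expression with variables among x_1, …, x_m, let 𝔈 be the set of all safe subexpressions occurring in E, and let f^𝔈 and the variables (p_{E'})_{E'∈𝔈} be such that E' and KF_{f^𝔈}^{p_{E'}} denote the same subset in every frame under every assignment, for all E' ∈ 𝔈. Define the modal translation E^T by: E'^T = p_{E'} for safe E'; (E_1 ∩ E_2)^T = E_1^T ∧ E_2^T; (E_1 ∪ E_2)^T = E_1^T ∨ E_2^T; (R_λ^{-1}E_1)^T = ◇_λ E_1^T; (R_λ^□E_1)^T = □_λ E_1^T. Then for every fixed l, the first-order formula (x_l ∈ E)^# is definable by the sequence of modal formulas φ_1, …, φ_m where φ_i = ⋁_{φ ∈ f^𝔈(x_i)} ¬φ for i ≠ l and φ_l = (⋁_{φ ∈ f^𝔈(x_l)} ¬φ) ∨ E^T; that is, for every frame F and points w_1, …, w_m: F ⊨ (x_l ∈ E)^#[w_1,…,w_m] iff for every valuation θ there exists i with F, w_i, θ ⊨ φ_i. -/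

import Mathlib

set_option autoImplicit true

universe u v w

/-- Modal formulas over modality indices `Λ` and propositional variables `V`. -/
inductive MF (Λ : Type u) (V : Type v) : Type (max u v)
  | var : V → MF Λ V
  | top : MF Λ V
  | bot : MF Λ V
  | and : MF Λ V → MF Λ V → MF Λ V
  | or  : MF Λ V → MF Λ V → MF Λ V
  | neg : MF Λ V → MF Λ V
  | imp : MF Λ V → MF Λ V → MF Λ V
  | dia : Λ → MF Λ V → MF Λ V
  | box : Λ → MF Λ V → MF Λ V

namespace MF
variable {Λ : Type u} {V : Type v}

/-- The set of propositional variables occurring in a modal formula. -/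
def vars : MF Λ V → Set V
  | var p => {p}
  | top => ∅
  | bot => ∅
  | and a b => vars a ∪ vars b
  | or a b => vars a ∪ vars b
  | neg a => vars a
  | imp a b => vars a ∪ vars b
  | dia _ a => vars a
  | box _ a => vars a

end MF

/-- Positive modal formulas: built without `¬` and `→`. -/
inductive Positive {Λ : Type u} {V : Type v} : MF Λ V → Prop
  | var (p : V) : Positive (.var p)
  | top : Positive .top
  | bot : Positive .bot
  | and {a b} : Positive a → Positive b → Positive (.and a b)
  | or {a b} : Positive a → Positive b → Positive (.or a b)
  | dia (l) {a} : Positive a → Positive (.dia l a)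
  | box (l) {a} : Positive a → Positive (.box l a)

/-- A Kripke frame with accessibility relations indexed by `Λ`. -/
structure Frame (Λ : Type u) where
  W : Type w
  R : Λ → W → W → Prop

/-- Kripke satisfaction `F, x, θ ⊨ φ`. -/
def sat {Λ : Type u} {V : Type v} (F : Frame Λ) (θ : V → Set F.W) : F.W → MF Λ V → Prop
  | x, .var p => x ∈ θ p
  | _, .top => True
  | _, .bot => False
  | x, .and a b => sat F θ x a ∧ sat F θ x b
  | x, .or a b => sat F θ x a ∨ sat F θ x b
  | x, .neg a => ¬ sat F θ x a
  | x, .imp a b => sat F θ x a → sat F θ x b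
  | x, .dia l a => ∃ y, F.R l x y ∧ sat F θ y a
  | x, .box l a => ∀ y, F.R l x y → sat F θ y a

/-- `BoxF φ p S`: `φ` is a box-formula with head `p`, in which the set of variables
occurring not as the head is `S`. -/
inductive BoxF {Λ : Type u} {V : Type v} : MF Λ V → V → Set V → Prop
  | var (p : V) : BoxF (.var p) p ∅
  | imp {POS ψ p S} : Positive POS → BoxF ψ p S → BoxF (.imp POS ψ) p (MF.vars POS ∪ S)
  | box (l) {ψ p S} : BoxF ψ p S → BoxF (.box l ψ) p S

/-- `RegBF r φ p`: relative to the rank assignment `r`, `φ` is a regular box-formula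
with head `p` (of rank `r p`): all variables of the positive antecedents have rank `< r p`. -/
inductive RegBF {Λ : Type u} {V : Type v} (r : V → ℕ) : MF Λ V → V → Prop
  | var (p : V) : RegBF r (.var p) p
  | imp {POS ψ p} : Positive POS → (∀ q ∈ MF.vars POS, r q < r p) →
      RegBF r ψ p → RegBF r (.imp POS ψ) p
  | box (l) {ψ p} : RegBF r ψ p → RegBF r (.box l ψ) p

/-- The edge relation of the dependency graph of a set `A` of box-formulas:
`p → q` iff `p` occurs (not as the head) in some member of `A` with head `q`. -/
def depEdge {Λ : Type u} {V : Type v} (A : Set (MF Λ V)) (p q : V) : Prop :=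
  ∃ φ ∈ A, ∃ S, BoxF φ q S ∧ p ∈ S

/-- A set of box-formulas is regular if its dependency graph has no oriented cycle. -/
def RegularSet {Λ : Type u} {V : Type v} (A : Set (MF Λ V)) : Prop :=
  ∀ p : V, ¬ Relation.TransGen (depEdge A) p p

/-- `R_λ^{-1}(A) = {u : ∃ v, u R_λ v ∧ v ∈ A}`. -/
def Rinv {Λ : Type u} (F : Frame Λ) (l : Λ) (A : Set F.W) : Set F.W :=
  {u | ∃ v, F.R l u v ∧ v ∈ A}

/-- `R_λ^□(A) = {u : ∀ v, u R_λ v → v ∈ A}`. -/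
def RboxOp {Λ : Type u} (F : Frame Λ) (l : Λ) (A : Set F.W) : Set F.W :=
  {u | ∀ v, F.R l u v → v ∈ A}

/-- `R_λ(A) = {u : ∃ v, v R_λ u ∧ v ∈ A}`. -/
def Rfwd {Λ : Type u} (F : Frame Λ) (l : Λ) (A : Set F.W) : Set F.W :=
  {u | ∃ v, F.R l v u ∧ v ∈ A}

/-- The interpretation of the expression `KP^{POS}` in a frame `F`, the set variables
`P^l_i` being interpreted by `P`.  (Junk value `∅` on non-positive constructors.) -/
def KPsem {Λ : Type u} (F : Frame Λ) (P : ℕ × ℕ → Set F.W) : MF Λ (ℕ × ℕ) → Set F.W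
  | .var q => P q
  | .top => Set.univ
  | .bot => ∅
  | .and a b => KPsem F P a ∩ KPsem F P b
  | .or a b => KPsem F P a ∪ KPsem F P b
  | .dia l a => Rinv F l (KPsem F P a)
  | .box l a => RboxOp F l (KPsem F P a)
  | .neg _ => ∅
  | .imp _ _ => ∅

/-- The interpretation of the expression `KV^φ` in a frame `F`: the set variables `P^l_i`
are interpreted by `P` and the extra variable `#` by the second argument.
(Junk value `∅` on constructors that do not occur in regular box-formulas.) -/
def KVsem {Λ : Type u} (F : Frame Λ) (P : ℕ × ℕ → Set F.W) : MF Λ (ℕ × ℕ) → Set F.W → Set F.W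
  | .var _, X => X
  | .imp POS ψ, X => KVsem F P ψ (X ∩ KPsem F P POS)
  | .box l ψ, X => KVsem F P ψ (Rfwd F l X)
  | _, _ => ∅

/-- The semantic minimal valuation: given points `g j` and sets `f j` of regular
box-formulas to be verified at `g j`, `thetaMinSem F g f k i` is the minimal value of the
variable `p^k_i`; it is defined by recursion on the rank `k` as the union, over all `j` and
all `φ ∈ f j` with head `p^k_i`, of `KV^φ(g j)` computed with the minimal values of the
variables of lower rank. -/
noncomputable def thetaMinSem {Λ : Type u} (F : Frame Λ) {ι : Type w} (g : ι → F.W)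
    (f : ι → Set (MF Λ (ℕ × ℕ))) : ℕ → ℕ → Set F.W :=
  fun k => Nat.strongRecOn (motive := fun _ => ℕ → Set F.W) k fun k ih i =>
    ⋃ (j : ι), ⋃ φ ∈ f j, ⋃ (_ : RegBF Prod.fst φ (k, i)),
      KVsem F (fun q => if h : q.1 < k then ih q.1 h q.2 else ∅) φ {g j}

/-- `L`-expressions: terms of the language `L` with individual variables `x_i` (`i : ℕ`),
constants `⊤, ⊥`, unary `R_λ^{-1}`, `R_λ^□`, `R_λ` and binary `∩`, `∪`. -/
inductive LExp (Λ : Type u) : Type u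
  | var : ℕ → LExp Λ
  | top : LExp Λ
  | bot : LExp Λ
  | inter : LExp Λ → LExp Λ → LExp Λ
  | union : LExp Λ → LExp Λ → LExp Λ
  | rinv : Λ → LExp Λ → LExp Λ
  | rbox : Λ → LExp Λ → LExp Λ
  | rfw : Λ → LExp Λ → LExp Λ

namespace LExp
variable {Λ : Type u}

/-- Denotation of an `L`-expression in a frame `F`, the variable `x_i` denoting the
singleton of the point `g i`. -/
def den (F : Frame Λ) (g : ℕ → F.W) : LExp Λ → Set F.W
  | var i => {g i}
  | top => Set.univ
  | bot => ∅
  | inter a b => den F g a ∩ den F g b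
  | union a b => den F g a ∪ den F g b
  | rinv l a => Rinv F l (den F g a)
  | rbox l a => RboxOp F l (den F g a)
  | rfw l a => Rfwd F l (den F g a)

/-- The set of (indices of) individual variables occurring in an `L`-expression. -/
def evars : LExp Λ → Set ℕ
  | var i => {i}
  | top => ∅
  | bot => ∅
  | inter a b => evars a ∪ evars b
  | union a b => evars a ∪ evars b
  | rinv _ a => evars a
  | rbox _ a => evars a
  | rfw _ a => evars a

end LExp

/-- The subexpression relation on `L`-expressions. -/
inductive Subexp {Λ : Type u} : LExp Λ → LExp Λ → Prop
  | refl (e : LExp Λ) : Subexp e e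
  | interL {e a b} : Subexp e a → Subexp e (.inter a b)
  | interR {e a b} : Subexp e b → Subexp e (.inter a b)
  | unionL {e a b} : Subexp e a → Subexp e (.union a b)
  | unionR {e a b} : Subexp e b → Subexp e (.union a b)
  | rinv (l) {e a} : Subexp e a → Subexp e (.rinv l a)
  | rbox (l) {e a} : Subexp e a → Subexp e (.rbox l a)
  | rfw (l) {e a} : Subexp e a → Subexp e (.rfw l a)

/-- `SafeFor e`: `e` is "safe for" the ambient expression, i.e. `e` is a variable, or
`R_λ(e')` with `e'` safe for it, or an intersection one of whose components is safe for it. -/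
inductive SafeFor {Λ : Type u} : LExp Λ → Prop
  | var (i : ℕ) : SafeFor (.var i)
  | rfw (l) {a} : SafeFor a → SafeFor (.rfw l a)
  | interL {a b} : SafeFor a → SafeFor (.inter a b)
  | interR {a b} : SafeFor b → SafeFor (.inter a b)

/-- An `L`-expression is safe if it is safe for itself and the argument of every
subexpression of the form `R_λ(ψ)` is safe for it. -/
def Safe {Λ : Type u} (e : LExp Λ) : Prop :=
  SafeFor e ∧ ∀ l a, Subexp (.rfw l a) e → SafeFor a

mutual
  /-- The class `K`: the least class of `L`-expressions containing the variables and closed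
  under `S ↦ R_λ(S)` and `S ↦ S ∩ E` for `E` a positive combination of members of `K`. -/
  inductive InK {Λ : Type u} : LExp Λ → Prop
    | var (i : ℕ) : InK (.var i)
    | rfw (l : Λ) {S : LExp Λ} : InK S → InK (.rfw l S)
    | inter {S E : LExp Λ} : InK S → PosOfK E → InK (.inter S E)
  /-- Positive combinations of members of `K`: built from members of `K` using only
  `∩`, `∪`, `R_λ^{-1}`, `R_λ^□`, `⊤`, `⊥`. -/
  inductive PosOfK {Λ : Type u} : LExp Λ → Prop
    | ofK {e : LExp Λ} : InK e → PosOfK e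
    | top : PosOfK .top
    | bot : PosOfK .bot
    | inter {a b} : PosOfK a → PosOfK b → PosOfK (.inter a b)
    | union {a b} : PosOfK a → PosOfK b → PosOfK (.union a b)
    | rinv (l) {a} : PosOfK a → PosOfK (.rinv l a)
    | rbox (l) {a} : PosOfK a → PosOfK (.rbox l a)
end

/-- Quasi-safe `L`-expressions: positive combinations of safe expressions, i.e. built from
safe expressions using only `∩`, `∪`, `R_λ^{-1}`, `R_λ^□`, `⊤`, `⊥`. -/
inductive QuasiSafe {Λ : Type u} : LExp Λ → Prop
  | safe {e : LExp Λ} : Safe e → QuasiSafe e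
  | top : QuasiSafe .top
  | bot : QuasiSafe .bot
  | inter {a b} : QuasiSafe a → QuasiSafe b → QuasiSafe (.inter a b)
  | union {a b} : QuasiSafe a → QuasiSafe b → QuasiSafe (.union a b)
  | rinv (l) {a} : QuasiSafe a → QuasiSafe (.rinv l a)
  | rbox (l) {a} : QuasiSafe a → QuasiSafe (.rbox l a)

/-- `ReplOne i ψ φ φ'`: `φ'` is the result of replacing one occurrence of the variable
`x_i` in `φ` by `ψ`. -/
inductive ReplOne {Λ : Type u} (i : ℕ) (ψ : LExp Λ) : LExp Λ → LExp Λ → Prop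
  | here : ReplOne i ψ (.var i) ψ
  | interL {a a' b} : ReplOne i ψ a a' → ReplOne i ψ (.inter a b) (.inter a' b)
  | interR {a b b'} : ReplOne i ψ b b' → ReplOne i ψ (.inter a b) (.inter a b')
  | unionL {a a' b} : ReplOne i ψ a a' → ReplOne i ψ (.union a b) (.union a' b)
  | unionR {a b b'} : ReplOne i ψ b b' → ReplOne i ψ (.union a b) (.union a b')
  | rinv (l) {a a'} : ReplOne i ψ a a' → ReplOne i ψ (.rinv l a) (.rinv l a')
  | rbox (l) {a a'} : ReplOne i ψ a a' → ReplOne i ψ (.rbox l a) (.rbox l a')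
  | rfw (l) {a a'} : ReplOne i ψ a a' → ReplOne i ψ (.rfw l a) (.rfw l a')

/-- A finite union of `L`-expressions (empty union is `⊥`). -/
def unionList {Λ : Type u} : List (LExp Λ) → LExp Λ
  | [] => .bot
  | e :: es => .union e (unionList es)

/-- `UnionOfSafe e`: `e` is a finite union of safe expressions. -/
inductive UnionOfSafe {Λ : Type u} : LExp Λ → Prop
  | bot : UnionOfSafe .bot
  | safe {e : LExp Λ} : Safe e → UnionOfSafe e
  | union {a b} : UnionOfSafe a → UnionOfSafe b → UnionOfSafe (.union a b)

/-- Syntactic `KP^{POS}`: the `L`-expression obtained from the positive formula `POS` by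
replacing each set variable `P^l_i` by the `L`-expression `KF (l, i)`.
(Junk value on non-positive constructors.) -/
def KPsub {Λ : Type u} (KF : ℕ × ℕ → LExp Λ) : MF Λ (ℕ × ℕ) → LExp Λ
  | .var q => KF q
  | .top => .top
  | .bot => .bot
  | .and a b => .inter (KPsub KF a) (KPsub KF b)
  | .or a b => .union (KPsub KF a) (KPsub KF b)
  | .dia l a => .rinv l (KPsub KF a)
  | .box l a => .rbox l (KPsub KF a)
  | .neg _ => .bot
  | .imp _ _ => .bot

/-- Syntactic `KVF^φ(t)`: the `L`-expression obtained from `KV^φ` by substituting the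
`L`-expression `t` for `#` and `KF (l, i)` for each set variable `P^l_i`.
(Junk value on constructors that do not occur in regular box-formulas.) -/
def KVFsyn {Λ : Type u} (KF : ℕ × ℕ → LExp Λ) : MF Λ (ℕ × ℕ) → LExp Λ → LExp Λ
  | .var _, t => t
  | .imp POS ψ, t => KVFsyn KF ψ (.inter t (KPsub KF POS))
  | .box l ψ, t => KVFsyn KF ψ (.rfw l t)
  | _, _ => .bot

open scoped Classical in
/-- The syntactic minimal valuation `KF_f^{p^k_i}` for variables `x_0, …, x_{n-1}` and
`f` assigning to each variable a finite set of regular box-formulas: defined by recursion on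
the rank `k` as the union, over all `j < n` and all `φ ∈ f j` with head `p^k_i`, of
`KVF_f^φ(x_j)`, which is `KV^φ` with `x_j` substituted for `#` and `KF_f^{p^l_m}`
substituted for each `P^l_m` with `l < k`. -/
noncomputable def KFsyn {Λ : Type u} (n : ℕ) (f : ℕ → Finset (MF Λ (ℕ × ℕ))) :
    ℕ → ℕ → LExp Λ :=
  fun k => Nat.strongRecOn (motive := fun _ => ℕ → LExp Λ) k fun k ih i =>
    unionList (((List.range n).flatMap fun j =>
      ((f j).toList.filter fun φ => decide (RegBF Prod.fst φ (k, i))).map fun φ =>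
        KVFsyn (fun q => if h : q.1 < k then ih q.1 h q.2 else LExp.bot) φ (LExp.var j)))

/-- The expressions substituted for the set variables `P^l_m`, `l < k`, in `KVF`:
the syntactic minimal valuations of the lower ranks. -/
noncomputable def lowKF {Λ : Type u} (n : ℕ) (f : ℕ → Finset (MF Λ (ℕ × ℕ))) (k : ℕ) :
    ℕ × ℕ → LExp Λ :=
  fun q => if q.1 < k then KFsyn n f q.1 q.2 else LExp.bot

/-- `KVFat n f φ j k` is the `L`-expression `KVF_f^φ(x_j)` for `φ` a regular box-formula
of rank `k`. -/
noncomputable def KVFat {Λ : Type u} (n : ℕ) (f : ℕ → Finset (MF Λ (ℕ × ℕ)))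
    (φ : MF Λ (ℕ × ℕ)) (j k : ℕ) : LExp Λ :=
  KVFsyn (lowKF n f k) φ (.var j)

/-- A labelled tree-like structure: a set of vertices with relations indexed by `Λ`,
a root, and a label function assigning to every vertex a set of labels from `α`. -/
structure LabTree (Λ : Type u) (α : Type v) where
  V : Type
  R : Λ → V → V → Prop
  root : V
  label : V → Set α

/-- Derivation trees witnessing that a formula is built from base formulas using only
`∧` and `◇_λ`. -/
inductive BuiltT (Λ : Type u) (V : Type v) : Type (max u v)
  | base : MF Λ V → BuiltT Λ V
  | and : BuiltT Λ V → BuiltT Λ V → BuiltT Λ V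
  | dia : Λ → BuiltT Λ V → BuiltT Λ V

/-- The modal formula described by a derivation tree. -/
def BuiltT.formula {Λ : Type u} {V : Type v} : BuiltT Λ V → MF Λ V
  | base φ => φ
  | and a b => .and a.formula b.formula
  | dia l a => .dia l a.formula

/-- The derivation tree uses only base formulas from `A`. -/
def BuiltT.Ok {Λ : Type u} {V : Type v} (A : Set (MF Λ V)) : BuiltT Λ V → Prop
  | base φ => φ ∈ A
  | and a b => a.Ok A ∧ b.Ok A
  | dia _ a => a.Ok A

/-- Helper for gluing two labelled trees at their roots: the relation on the disjoint sum,
with the edges out of the second root re-attached to the first root. -/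
def glueR {Λ : Type u} {W₁ W₂ : Type} (R₁ : Λ → W₁ → W₁ → Prop) (R₂ : Λ → W₂ → W₂ → Prop)
    (r₁ : W₁) (r₂ : W₂) (l : Λ) : W₁ ⊕ W₂ → W₁ ⊕ W₂ → Prop
  | Sum.inl a, Sum.inl b => R₁ l a b
  | Sum.inr a, Sum.inr b => R₂ l a b
  | Sum.inl a, Sum.inr b => a = r₁ ∧ R₂ l r₂ b
  | Sum.inr _, Sum.inl _ => False

open Classical in
/-- Helper for gluing two labelled trees at their roots: the label function, the glued root
receiving the union of the two root labels. -/
noncomputable def glueLab {α : Type w} {W₁ W₂ : Type} (L₁ : W₁ → Set α) (L₂ : W₂ → Set α)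
    (r₁ : W₁) (r₂ : W₂) : W₁ ⊕ W₂ → Set α
  | Sum.inl a => if a = r₁ then L₁ r₁ ∪ L₂ r₂ else L₁ a
  | Sum.inr b => L₂ b

/-- Helper for prefixing a labelled tree with a new root: the relation on `Option W`,
with an `R_{l₀}`-edge from the new root `none` to the old root `r`. -/
def prefR {Λ : Type u} {W : Type} (R : Λ → W → W → Prop) (l₀ : Λ) (r : W) (l : Λ) :
    Option W → Option W → Prop
  | none, some w => l = l₀ ∧ w = r
  | some a, some b => R l a b
  | _, _ => False

/-- Helper for prefixing a labelled tree with a new root: the label function, the new root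
getting the empty label. -/
def prefLab {α : Type w} {W : Type} (L : W → Set α) : Option W → Set α
  | none => ∅
  | some a => L a

/-- The reduced syntactical tree of a formula built from base formulas using `∧` and `◇_λ`:
a single root labelled `{a}` for a base formula `a`; for a conjunction, the two trees
with their roots identified (labels united); for `◇_λ ψ`, a new root with empty label and an
`R_λ`-edge to the root of the tree of `ψ`. -/
noncomputable def TreeOf {Λ : Type u} {V : Type v} : BuiltT Λ V → LabTree Λ (MF Λ V)
  | .base φ =>
      { V := Unit, R := fun _ _ _ => False, root := (), label := fun _ => {φ} }
  | .and b₁ b₂ =>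
      let T₁ := TreeOf b₁
      let T₂ := TreeOf b₂
      { V := {v : T₁.V ⊕ T₂.V // v ≠ Sum.inr T₂.root},
        R := fun l u v => glueR T₁.R T₂.R T₁.root T₂.root l u.1 v.1,
        root := ⟨Sum.inl T₁.root, by exact Sum.inl_ne_inr⟩,
        label := fun v => glueLab T₁.label T₂.label T₁.root T₂.root v.1 }
  | .dia l b =>
      let T := TreeOf b
      { V := Option T.V,
        R := fun l' u v => prefR T.R l T.root l' u v,
        root := none,
        label := fun v => prefLab T.label v }

/-- Restrictedly positive first-order formulas over the frame language: built from atoms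
`y ∈ E` (`E` an `L`-expression) using `∧`, `∨` and the restricted quantifiers
`(∀ y ◁_λ x)` and `(∃ y ◁_λ x)`. -/
inductive KrF (Λ : Type u) : Type u
  | atom : ℕ → LExp Λ → KrF Λ
  | and : KrF Λ → KrF Λ → KrF Λ
  | or : KrF Λ → KrF Λ → KrF Λ
  | all : ℕ → Λ → ℕ → KrF Λ → KrF Λ
  | ex : ℕ → Λ → ℕ → KrF Λ → KrF Λ

namespace KrF
variable {Λ : Type u}

/-- Truth of a restrictedly positive formula in a frame under an assignment `g` of points to
individual variables; the atom `y ∈ E` is read via the `#`-translation, i.e. as membership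
of `g y` in the denotation of `E`. -/
def holds (F : Frame Λ) : (ℕ → F.W) → KrF Λ → Prop
  | g, atom y E => g y ∈ E.den F g
  | g, and a b => holds F g a ∧ holds F g b
  | g, or a b => holds F g a ∨ holds F g b
  | g, all y l x β => ∀ w, F.R l (g x) w → holds F (Function.update g y w) β
  | g, ex y l x β => ∃ w, F.R l (g x) w ∧ holds F (Function.update g y w) β

/-- Free variables. -/
def fv : KrF Λ → Set ℕ
  | atom y E => insert y E.evars
  | and a b => fv a ∪ fv b
  | or a b => fv a ∪ fv b
  | all y _ x β => insert x (fv β \ {y})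
  | ex y _ x β => insert x (fv β \ {y})

/-- Bound variables. -/
def bv : KrF Λ → Set ℕ
  | atom _ _ => ∅
  | and a b => bv a ∪ bv b
  | or a b => bv a ∪ bv b
  | all y _ _ β => insert y (bv β)
  | ex y _ _ β => insert y (bv β)

/-- No two distinct quantifier occurrences bind the same variable. -/
def CleanBound : KrF Λ → Prop
  | atom _ _ => True
  | and a b => CleanBound a ∧ CleanBound b ∧ bv a ∩ bv b = ∅
  | or a b => CleanBound a ∧ CleanBound b ∧ bv a ∩ bv b = ∅
  | all y _ _ β => CleanBound β ∧ y ∉ bv β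
  | ex y _ _ β => CleanBound β ∧ y ∉ bv β

/-- Clean formulas: no variable occurs both free and bound, and no two distinct quantifier
occurrences bind the same variable. -/
def Clean (φ : KrF Λ) : Prop := fv φ ∩ bv φ = ∅ ∧ CleanBound φ

/-- All the `L`-expressions occurring in atoms of the formula satisfy `P`. -/
def AtomsAll (P : LExp Λ → Prop) : KrF Λ → Prop
  | atom _ E => P E
  | and a b => AtomsAll P a ∧ AtomsAll P b
  | or a b => AtomsAll P a ∧ AtomsAll P b
  | all _ _ _ β => AtomsAll P β
  | ex _ _ _ β => AtomsAll P β

/-- Quantifier-free formulas (built from atoms using only `∧` and `∨`). -/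
def QFree : KrF Λ → Prop
  | atom _ _ => True
  | and a b => QFree a ∧ QFree b
  | or a b => QFree a ∧ QFree b
  | all _ _ _ _ => False
  | ex _ _ _ _ => False

/-- Formulas built from atoms using only `∧`, `∨` and restricted universal quantification
(no existential quantifier). -/
def NoEx : KrF Λ → Prop
  | atom _ _ => True
  | and a b => NoEx a ∧ NoEx b
  | or a b => NoEx a ∧ NoEx b
  | all _ _ _ β => NoEx β
  | ex _ _ _ _ => False

/-- `GKok U e φ`: every variable occurring in an `L`-expression of an atom of `φ` is
inherently universal. Here `U` is the set of variables that are inherently universal so far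
(initially the free variables) and `e` records whether we are within the scope of an
existential quantifier. -/
def GKok : Set ℕ → Bool → KrF Λ → Prop
  | U, _, atom _ E => E.evars ⊆ U
  | U, e, and a b => GKok U e a ∧ GKok U e b
  | U, e, or a b => GKok U e a ∧ GKok U e b
  | U, false, all y _ _ β => GKok (insert y U) false β
  | U, true, all _ _ _ β => GKok U true β
  | U, _, ex _ _ _ β => GKok U true β

end KrF

/-- A generalized Kracht formula with free variables: clean, restrictedly positive with safe
atoms, and in every atom `y ∈ E` all variables of `E` are inherently universal. -/
def IsGenKrachtFV {Λ : Type u} (α : KrF Λ) : Prop :=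
  α.Clean ∧ α.AtomsAll Safe ∧ α.GKok α.fv false

/-- A generalized Kracht formula: a generalized Kracht formula with free variables whose
only free variable is `x0`. -/
def IsGenKracht {Λ : Type u} (α : KrF Λ) (x0 : ℕ) : Prop :=
  IsGenKrachtFV α ∧ α.fv = {x0}

/-- Generalized Sahlqvist antecedents: built from regular box-formulas and negative
formulas using only `∧`, `∨`, `◇_λ`. -/
inductive GSAnt {Λ : Type u} : MF Λ (ℕ × ℕ) → Prop
  | reg {φ p} : RegBF Prod.fst φ p → GSAnt φ
  | neg {φ} : Positive φ → GSAnt (.neg φ)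
  | and {a b} : GSAnt a → GSAnt b → GSAnt (.and a b)
  | or {a b} : GSAnt a → GSAnt b → GSAnt (.or a b)
  | dia (l) {a} : GSAnt a → GSAnt (.dia l a)

/-- Generalized Sahlqvist formulas: built from generalized Sahlqvist implications
`GSA → ⊥` by applying boxes and conjunctions, and disjunctions only to formulas without
common propositional variables. -/
inductive GSF {Λ : Type u} : MF Λ (ℕ × ℕ) → Prop
  | impl {a} : GSAnt a → GSF (.imp a .bot)
  | box (l) {a} : GSF a → GSF (.box l a)
  | and {a b} : GSF a → GSF b → GSF (.and a b)
  | or {a b} : GSF a → GSF b → MF.vars a ∩ MF.vars b = ∅ → GSF (.or a b)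

open Classical in
/-- The modal translation `E^T` of a quasi-safe expression: safe subexpressions are
replaced by their associated propositional variables `p_E`, and `∩, ∪, R^{-1}_λ, R^□_λ`
become `∧, ∨, ◇_λ, □_λ`. -/
noncomputable def Etrans {Λ : Type u} (pE : LExp Λ → ℕ × ℕ) : LExp Λ → MF Λ (ℕ × ℕ)
  | .var i => .var (pE (.var i))
  | .top => .top
  | .bot => .bot
  | .inter a b =>
      if Safe (LExp.inter a b) then .var (pE (.inter a b))
      else .and (Etrans pE a) (Etrans pE b)
  | .union a b =>
      if Safe (LExp.union a b) then .var (pE (.union a b))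
      else .or (Etrans pE a) (Etrans pE b)
  | .rinv l a =>
      if Safe (LExp.rinv l a) then .var (pE (.rinv l a)) else .dia l (Etrans pE a)
  | .rbox l a =>
      if Safe (LExp.rbox l a) then .var (pE (.rbox l a)) else .box l (Etrans pE a)
  | .rfw l a => if Safe (LExp.rfw l a) then .var (pE (.rfw l a)) else .bot

/-- A finite disjunction of modal formulas (empty disjunction is `⊥`). -/
def orList {Λ : Type u} {V : Type v} : List (MF Λ V) → MF Λ V
  | [] => .bot
  | a :: as => .or a (orList as)

/-!
The valuation `p^k_i ↦ KF_f^{p^k_i}` is, by induction on the rank, the least valuation making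
every `φ ∈ f(x_j)` true at `w_j`, and it does make all of them true. Under it each `p_{E'}`
denotes `E'`, so `E^T` holds at `w_l` exactly when `w_l ∈ E`; as `E^T` is positive, it then
holds under every valuation verifying all of `f`, while any other valuation falsifies some
`φ ∈ f(x_j)`. The hypothesis on `KF` speaks about frames in one universe only: it is moved to
frames in any universe through a countable Skolem hull, on which `L`-expressions keep their
meaning.
-/

universe w₁ w₂

open Function

section Positive

variable {Λ : Type u} {V : Type v} {F : Frame Λ}

theorem Positive.sat_mono {φ : MF Λ V} (hφ : Positive φ) {θ₁ θ₂ : V → Set F.W}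
    (hθ : ∀ q ∈ φ.vars, θ₁ q ⊆ θ₂ q) {w : F.W} (h : sat F θ₁ w φ) : sat F θ₂ w φ := by
  induction hφ generalizing w with
  | var p => exact hθ p rfl h
  | top | bot => exact h
  | and _ _ iha ihb =>
    exact ⟨iha (fun q hq => hθ q (.inl hq)) h.1, ihb (fun q hq => hθ q (.inr hq)) h.2⟩
  | or _ _ iha ihb =>
    exact h.imp (iha fun q hq => hθ q (.inl hq)) (ihb fun q hq => hθ q (.inr hq))
  | dia _ _ ih => exact h.imp fun v hv => ⟨hv.1, ih hθ hv.2⟩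
  | box _ _ ih => exact fun v hv => ih hθ (h v hv)

theorem Positive.mem_den_KPsub_iff {POS : MF Λ (ℕ × ℕ)} (hPOS : Positive POS)
    {KF : ℕ × ℕ → LExp Λ} {g : ℕ → F.W} {w : F.W} :
    w ∈ (KPsub KF POS).den F g ↔ sat F (fun q => (KF q).den F g) w POS := by
  induction hPOS generalizing w with
  | var | top | bot => rfl
  | and _ _ iha ihb => exact and_congr iha ihb
  | or _ _ iha ihb => exact or_congr iha ihb
  | dia _ _ ih => exact exists_congr fun v => and_congr_right' ih
  | box _ _ ih => exact forall_congr' fun v => imp_congr_right fun _ => ih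

theorem sat_orList {θ : V → Set F.W} {w : F.W} (L : List (MF Λ V)) :
    sat F θ w (orList L) ↔ ∃ φ ∈ L, sat F θ w φ := by
  induction L with
  | nil => simp [orList, sat]
  | cons φ L ih => simp [orList, sat, ih]

theorem sat_orList_map_neg {θ : V → Set F.W} {w : F.W} (L : List (MF Λ V)) :
    sat F θ w (orList (L.map MF.neg)) ↔ ∃ φ ∈ L, ¬ sat F θ w φ := by
  simp [sat_orList, sat]

end Positive

section MinimalValuation

variable {Λ : Type u} {F : Frame Λ} {g : ℕ → F.W}

theorem RegBF.den_KVFsyn_subset {r : ℕ × ℕ → ℕ} {φ : MF Λ (ℕ × ℕ)} {p : ℕ × ℕ}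
    (hφ : RegBF r φ p) {θ : ℕ × ℕ → Set F.W} {KF : ℕ × ℕ → LExp Λ}
    (hKF : ∀ q, (KF q).den F g ⊆ θ q) {t : LExp Λ} (ht : ∀ w ∈ t.den F g, sat F θ w φ) :
    (KVFsyn KF φ t).den F g ⊆ θ p := by
  induction hφ generalizing t with
  | var => exact ht
  | imp hPOS _ _ ih =>
    exact ih fun w hw =>
      ht w hw.1 (hPOS.sat_mono (fun q _ => hKF q) (hPOS.mem_den_KPsub_iff.1 hw.2))
  | box _ _ ih => exact ih fun w ⟨v, hvw, hv⟩ => ht v hv w hvw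

theorem RegBF.sat_of_den_KVFsyn_subset {r : ℕ × ℕ → ℕ} {φ : MF Λ (ℕ × ℕ)} {p : ℕ × ℕ}
    (hφ : RegBF r φ p) {θ : ℕ × ℕ → Set F.W} {KF : ℕ × ℕ → LExp Λ}
    (hKF : ∀ q, r q < r p → θ q ⊆ (KF q).den F g) {t : LExp Λ}
    (ht : (KVFsyn KF φ t).den F g ⊆ θ p) : ∀ w ∈ t.den F g, sat F θ w φ := by
  induction hφ generalizing t with
  | var => exact ht
  | imp hPOS hrank _ ih =>
    exact fun w hw hPOSw => ih hKF ht w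
      ⟨hw, hPOS.mem_den_KPsub_iff.2 (hPOS.sat_mono (fun q hq => hKF q (hrank q hq)) hPOSw)⟩
  | box l _ ih => exact fun w hw v hwv => ih hKF ht v ⟨w, hwv, hw⟩

theorem mem_den_unionList {w : F.W} (L : List (LExp Λ)) :
    w ∈ (unionList L).den F g ↔ ∃ e ∈ L, w ∈ e.den F g := by
  induction L with
  | nil => simp [unionList, LExp.den]
  | cons e L ih => simp [unionList, LExp.den, ih]

theorem mem_den_KFsyn_iff {n : ℕ} {f : ℕ → Finset (MF Λ (ℕ × ℕ))} {k i : ℕ} {w : F.W} :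
    w ∈ (KFsyn n f k i).den F g ↔
      ∃ j < n, ∃ φ ∈ f j, RegBF Prod.fst φ (k, i) ∧ w ∈ (KVFat n f φ j k).den F g := by
  classical
  have hunfold : KFsyn n f k i = unionList ((List.range n).flatMap fun j =>
      ((f j).toList.filter fun φ => decide (RegBF Prod.fst φ (k, i))).map fun φ =>
        KVFat n f φ j k) := by
    rw [KFsyn, Nat.strongRecOn_eq]
    rfl
  rw [hunfold, mem_den_unionList]
  simp only [List.mem_flatMap, List.mem_range, List.mem_map, List.mem_filter,
    Finset.mem_toList, decide_eq_true_eq]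
  constructor
  · rintro ⟨_, ⟨j, hj, φ, ⟨hφ, hreg⟩, rfl⟩, hw⟩
    exact ⟨j, hj, φ, hφ, hreg, hw⟩
  · rintro ⟨j, hj, φ, hφ, hreg, hw⟩
    exact ⟨_, ⟨j, hj, φ, ⟨hφ, hreg⟩, rfl⟩, hw⟩

variable (F g) in
def KFval (n : ℕ) (f : ℕ → Finset (MF Λ (ℕ × ℕ))) : ℕ × ℕ → Set F.W :=
  fun q => (KFsyn n f q.1 q.2).den F g

theorem KFval_subset {n : ℕ} {f : ℕ → Finset (MF Λ (ℕ × ℕ))} {θ : ℕ × ℕ → Set F.W}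
    (hθ : ∀ j, ∀ φ ∈ f j, sat F θ (g j) φ) (q : ℕ × ℕ) : KFval F g n f q ⊆ θ q := by
  obtain ⟨k, i⟩ := q
  induction k using Nat.strong_induction_on generalizing i with
  | _ k ih =>
    intro w hw
    obtain ⟨j, -, φ, hφ, hreg, hw⟩ := mem_den_KFsyn_iff.1 hw
    refine hreg.den_KVFsyn_subset (fun q => ?_) (fun v hv => ?_) hw
    · by_cases hq : q.1 < k
      · simpa [lowKF, hq, KFval] using ih q.1 hq q.2
      · simp [lowKF, hq, LExp.den]
    · rw [show v = g j from hv]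
      exact hθ j φ hφ

theorem sat_KFval {n : ℕ} {f : ℕ → Finset (MF Λ (ℕ × ℕ))}
    (hf : ∀ j, ∀ φ ∈ f j, ∃ p : ℕ × ℕ, RegBF Prod.fst φ p) {j : ℕ} (hj : j < n)
    {φ : MF Λ (ℕ × ℕ)} (hφ : φ ∈ f j) : sat F (KFval F g n f) (g j) φ := by
  obtain ⟨⟨k, i⟩, hreg⟩ := hf j φ hφ
  refine hreg.sat_of_den_KVFsyn_subset (KF := lowKF n f k) (fun q hq => ?_)
    (fun w hw => mem_den_KFsyn_iff.2 ⟨j, hj, φ, hφ, hreg, hw⟩) (g j) rfl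
  simp [lowKF, show q.1 < k from hq, KFval]

end MinimalValuation

section Translation

variable {Λ : Type u} {pE : LExp Λ → ℕ × ℕ}

theorem Etrans_of_safe {e : LExp Λ} (h : Safe e) : Etrans pE e = .var (pE e) := by
  cases e with
  | var | inter | rfw => simp [Etrans, h]
  | top | bot | union | rinv | rbox => cases h.1

theorem positive_Etrans (e : LExp Λ) : Positive (Etrans pE e) := by
  induction e with
  | var => exact .var _
  | top => exact .top
  | bot => exact .bot
  | inter a b iha ihb => simp only [Etrans]; split <;> first | exact .var _ | exact .and iha ihb
  | union a b iha ihb => simp only [Etrans]; split <;> first | exact .var _ | exact .or iha ihb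
  | rinv l a ih => simp only [Etrans]; split <;> first | exact .var _ | exact .dia l ih
  | rbox l a ih => simp only [Etrans]; split <;> first | exact .var _ | exact .box l ih
  | rfw l a => simp only [Etrans]; split <;> first | exact .var _ | exact .bot

theorem sat_Etrans_of_safe {e : LExp Λ} (hs : Safe e) {F : Frame Λ} {g : ℕ → F.W}
    {θ : ℕ × ℕ → Set F.W} (hθ : θ (pE e) = e.den F g) (w : F.W) :
    sat F θ w (Etrans pE e) ↔ w ∈ e.den F g := by
  rw [Etrans_of_safe hs, sat, hθ]

theorem QuasiSafe.sat_Etrans_iff {e : LExp Λ} (he : QuasiSafe e) {F : Frame Λ} {g : ℕ → F.W}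
    {θ : ℕ × ℕ → Set F.W} (hθ : ∀ e', Subexp e' e → Safe e' → θ (pE e') = e'.den F g)
    (w : F.W) : sat F θ w (Etrans pE e) ↔ w ∈ e.den F g := by
  induction he generalizing w with
  | @safe e hs => exact sat_Etrans_of_safe hs (hθ e (.refl e) hs) w
  | top | bot => rfl
  | @inter a b _ _ iha ihb =>
    by_cases hs : Safe (.inter a b)
    · exact sat_Etrans_of_safe hs (hθ _ (.refl _) hs) w
    · simp only [Etrans, if_neg hs, sat, iha (fun e' h => hθ e' (.interL h)),
        ihb (fun e' h => hθ e' (.interR h))]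
      rfl
  | @union a b _ _ iha ihb =>
    by_cases hs : Safe (.union a b)
    · exact sat_Etrans_of_safe hs (hθ _ (.refl _) hs) w
    · simp only [Etrans, if_neg hs, sat, iha (fun e' h => hθ e' (.unionL h)),
        ihb (fun e' h => hθ e' (.unionR h))]
      rfl
  | @rinv l a _ ih =>
    by_cases hs : Safe (.rinv l a)
    · exact sat_Etrans_of_safe hs (hθ _ (.refl _) hs) w
    · simp only [Etrans, if_neg hs, sat, ih (fun e' h => hθ e' (.rinv l h))]
      rfl
  | @rbox l a _ ih =>
    by_cases hs : Safe (.rbox l a)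
    · exact sat_Etrans_of_safe hs (hθ _ (.refl _) hs) w
    · simp only [Etrans, if_neg hs, sat, ih (fun e' h => hθ e' (.rbox l h))]
      rfl

end Translation

section Transfer

variable {Λ : Type u}

abbrev Frame.comap (F : Frame.{u, w₂} Λ) {X : Type w₁} (e : X → F.W) : Frame.{u, w₁} Λ :=
  ⟨X, fun l a b => F.R l (e a) (e b)⟩

def LExp.subexps (e : LExp Λ) : List (LExp Λ) :=
  e :: match e with
    | .inter a b | .union a b => a.subexps ++ b.subexps
    | .rinv _ a | .rbox _ a | .rfw _ a => a.subexps
    | .var _ | .top | .bot => []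

theorem Subexp.mem_subexps {e' e : LExp Λ} (h : Subexp e' e) : e' ∈ e.subexps := by
  induction h with
  | refl e => unfold LExp.subexps; exact List.mem_cons_self
  | _ => simp_all [LExp.subexps]

namespace LExp

variable (F : Frame Λ) (g : ℕ → F.W)

noncomputable def skolem : LExp Λ → F.W → F.W
  | rinv l a, w => @Classical.epsilon _ ⟨w⟩ fun v => F.R l w v ∧ v ∈ a.den F g
  | rbox l a, w => @Classical.epsilon _ ⟨w⟩ fun v => F.R l w v ∧ v ∉ a.den F g
  | rfw l a, w => @Classical.epsilon _ ⟨w⟩ fun v => F.R l v w ∧ v ∈ a.den F g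
  | _, w => w

theorem mem_den_comap_iff {X : Type w₁} {e : X → F.W} (he : Injective e) {g₀ : ℕ → X}
    (hg₀ : ∀ i, e (g₀ i) = g i) {E : LExp Λ}
    (hE : ∀ E', Subexp E' E → ∀ x, skolem F g E' (e x) ∈ Set.range e) (x : X) :
    x ∈ E.den (F.comap e) g₀ ↔ e x ∈ E.den F g := by
  induction E generalizing x with
  | var i =>
    show x = g₀ i ↔ e x = g i
    rw [← hg₀ i, he.eq_iff]
  | top | bot => rfl
  | inter a b iha ihb =>
    exact and_congr (iha (fun E' h => hE E' (.interL h)) x) (ihb (fun E' h => hE E' (.interR h)) x)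
  | union a b iha ihb =>
    exact or_congr (iha (fun E' h => hE E' (.unionL h)) x) (ihb (fun E' h => hE E' (.unionR h)) x)
  | rinv l a ih =>
    have ih := ih fun E' h => hE E' (.rinv l h)
    refine ⟨fun ⟨y, hxy, hy⟩ => ⟨e y, hxy, (ih y).1 hy⟩, fun hx => ?_⟩
    obtain ⟨y, hy⟩ := hE _ (.refl _) x
    obtain ⟨hxy, hya⟩ : F.R l (e x) (e y) ∧ e y ∈ a.den F g := hy ▸ Classical.epsilon_spec hx
    exact ⟨y, hxy, (ih y).2 hya⟩
  | rbox l a ih =>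
    have ih := ih fun E' h => hE E' (.rbox l h)
    refine ⟨fun hx v hxv => by_contra fun hva => ?_, fun hx y hxy => (ih y).2 (hx (e y) hxy)⟩
    obtain ⟨y, hy⟩ := hE _ (.refl _) x
    have hex : ∃ v, F.R l (e x) v ∧ v ∉ a.den F g := ⟨v, hxv, hva⟩
    obtain ⟨hxy, hya⟩ : F.R l (e x) (e y) ∧ e y ∉ a.den F g := hy ▸ Classical.epsilon_spec hex
    exact hya ((ih y).1 (hx y hxy))
  | rfw l a ih =>
    have ih := ih fun E' h => hE E' (.rfw l h)
    refine ⟨fun ⟨y, hyx, hy⟩ => ⟨e y, hyx, (ih y).1 hy⟩, fun hx => ?_⟩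
    obtain ⟨y, hy⟩ := hE _ (.refl _) x
    obtain ⟨hyx, hya⟩ : F.R l (e y) (e x) ∧ e y ∈ a.den F g := hy ▸ Classical.epsilon_spec hx
    exact ⟨y, hyx, (ih y).2 hya⟩

/-- Code `(none, [t₁, …, tₙ])` stands for the point reached from `x` by the Skolem functions of
`ops[t₁], …, ops[tₙ]`, and `(some i, …)` likewise from `g i`. -/
noncomputable def skolemHull (ops : List (LExp Λ)) (x : F.W) (c : Option ℕ × List ℕ) : F.W :=
  c.2.foldl (fun w t => skolem F g (ops.getD t bot) w) (c.1.elim x g)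

theorem skolem_skolemHull_mem_range {ops : List (LExp Λ)} {E : LExp Λ} (hE : E ∈ ops)
    (x : F.W) (c : Option ℕ × List ℕ) :
    skolem F g E (skolemHull F g ops x c) ∈ Set.range (skolemHull F g ops x) := by
  obtain ⟨t, ht, rfl⟩ := List.getElem_of_mem hE
  exact ⟨(c.1, c.2 ++ [t]), by simp [skolemHull, List.getElem?_eq_getElem ht]⟩

variable {F g} in
theorem den_eq_of_forall_frame {E₁ E₂ : LExp Λ}
    (h : ∀ (F : Frame.{u, w₁} Λ) (g : ℕ → F.W), E₁.den F g = E₂.den F g)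
    (F : Frame.{u, w₂} Λ) (g : ℕ → F.W) : E₁.den F g = E₂.den F g := by
  ext x
  set ops := E₁.subexps ++ E₂.subexps
  set H := skolemHull F g ops x
  -- `Set.range H` is countable, hence small in the universe `w₁`.
  let ι : Shrink.{w₁} (Set.range H) ≃ Set.range H := (equivShrink _).symm
  let e : Shrink.{w₁} (Set.range H) → F.W := fun y => (ι y).1
  have he : Injective e := Subtype.val_injective.comp ι.injective
  have hclosed : ∀ E' ∈ ops, ∀ y, skolem F g E' (e y) ∈ Set.range e := by
    intro E' hE' y
    obtain ⟨c, hc⟩ := (ι y).2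
    have hc' : skolem F g E' (H c) ∈ Set.range H := skolem_skolemHull_mem_range F g hE' x c
    rw [hc] at hc'
    obtain ⟨c', hc'⟩ := hc'
    exact ⟨ι.symm ⟨H c', c', rfl⟩, by simp [e, hc']⟩
  let x₀ := ι.symm ⟨x, (none, []), rfl⟩
  let g₀ i := ι.symm ⟨g i, (some i, []), rfl⟩
  have hx₀ : e x₀ = x := by simp [e, x₀]
  have hg₀ : ∀ i, e (g₀ i) = g i := by simp [e, g₀]
  have h₁ := mem_den_comap_iff F g he hg₀
    (fun E' h => hclosed E' (List.mem_append_left _ h.mem_subexps)) x₀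
  have h₂ := mem_den_comap_iff F g he hg₀
    (fun E' h => hclosed E' (List.mem_append_right _ h.mem_subexps)) x₀
  rw [hx₀] at h₁ h₂
  rw [← h₁, ← h₂, h]

end LExp

end Transfer

/-- let `E` be a quasi-safe expression with variables among `x_0, …, x_{m-1}`
and suppose every safe subexpression `E'` of `E` denotes the same subset as
`KF_{f^𝔈}^{p_{E'}}` in every frame under every assignment. Then the first-order formula
`(x_l ∈ E)^#` is definable by the sequence of modal formulas `φ_0, …, φ_{m-1}` where
`φ_i = ⋁_{φ ∈ f^𝔈(x_i)} ¬φ` for `i ≠ l` and `φ_l = (⋁_{φ ∈ f^𝔈(x_l)} ¬φ) ∨ E^T`. -/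
theorem statement17 {Λ : Type u} (E : LExp Λ) (m : ℕ)
    (hE : QuasiSafe E) (hvars : E.evars ⊆ {i : ℕ | i < m})
    (f : ℕ → Finset (MF Λ (ℕ × ℕ)))
    (hfreg : ∀ j, ∀ ψ ∈ f j, ∃ p : ℕ × ℕ, RegBF Prod.fst ψ p)
    (hsupp : ∀ j, m ≤ j → f j = ∅)
    (pE : LExp Λ → ℕ × ℕ)
    (hKF : ∀ E' : LExp Λ, Subexp E' E → Safe E' →
      ∀ (F : Frame Λ) (g : ℕ → F.W),
        E'.den F g = (KFsyn m f (pE E').1 (pE E').2).den F g)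
    (l : ℕ) (hl : l < m)
    (φs : ℕ → MF Λ (ℕ × ℕ))
    (hφs : ∀ i, φs i =
      if i = l then MF.or (orList ((f i).toList.map MF.neg)) (Etrans pE E)
      else orList ((f i).toList.map MF.neg)) :
    ∀ (F : Frame Λ) (g : ℕ → F.W),
      g l ∈ E.den F g ↔
        ∀ θ : ℕ × ℕ → Set F.W, ∃ i < m, sat F θ (g i) (φs i) := by
  intro F g
  have hEtrans : sat F (KFval F g m f) (g l) (Etrans pE E) ↔ g l ∈ E.den F g :=
    hE.sat_Etrans_iff (fun E' hE' hs => (LExp.den_eq_of_forall_frame (hKF E' hE' hs) F g).symm) _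
  have hsat_φs : ∀ θ i, sat F θ (g i) (φs i) ↔
      (∃ ψ ∈ f i, ¬ sat F θ (g i) ψ) ∨ (i = l ∧ sat F θ (g i) (Etrans pE E)) := by
    intro θ i
    rw [hφs]
    split_ifs with hi <;> simp [sat, sat_orList_map_neg, hi]
  constructor
  · intro hmem θ
    by_cases hθ : ∀ j, ∀ ψ ∈ f j, sat F θ (g j) ψ
    · refine ⟨l, hl, (hsat_φs θ l).2 (.inr ⟨rfl, ?_⟩)⟩
      exact (positive_Etrans E).sat_mono (fun q _ => KFval_subset hθ q) (hEtrans.2 hmem)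
    · push Not at hθ
      obtain ⟨j, ψ, hψ, hψθ⟩ := hθ
      have hj : j < m := by
        by_contra hj
        simp [hsupp j (not_lt.1 hj)] at hψ
      exact ⟨j, hj, (hsat_φs θ j).2 (.inl ⟨ψ, hψ, hψθ⟩)⟩
  · intro h
    obtain ⟨i, hi, hsat⟩ := h (KFval F g m f)
    rcases (hsat_φs _ i).1 hsat with ⟨ψ, hψ, hψθ⟩ | ⟨rfl, hsatE⟩
    · exact absurd (sat_KFval hfreg hi hψ) hψθ
    · exact hEtrans.1 hsatE
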